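/- arXiv:1110.4162 — 3 statements merged into one kernel-verified Lean document; each statement's English description precedes it below -/
import Mathlib

section
/- Let L/F be a finite field extension and let F₁, F₂ be intermediate fields of L/F such that the compositum F₁F₂ equals L and [L : F] = [F₁ : F]·[F₂ : F] (equivalently, the natural map F₁ ⊗_F F₂ → L is an isomorphism, i.e. F₁ ⊗_F F₂ is a field equal to L). If F₁/F is Galois and L/F₁ is Galois, then L/F is Galois. -/
/-!
Linear disjointness with `F₁ ⊔ F₂ = L` makes multiplication an isomorphism `F₁ ⊗_F F₂ ≅ L`, so
every `σ ∈ Aut(F₁/F)` extends to `σ ⊗ id ∈ Aut(L/F)`. Restriction `Aut(L/F) → Aut(F₁/F)` (defined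
since `F₁/F` is normal) is therefore surjective, and its kernel is `Aut(L/F₁)`. Hence
`|Aut(L/F)| = [F₁ : F]·[L : F₁] = [L : F]`, and `L/F` is Galois.
-/

universe u

open scoped TensorProduct

namespace Subalgebra.LinearDisjoint

variable {R S : Type*} [CommRing R] [CommRing S] [Algebra R S] {A B : Subalgebra R S}

noncomputable def extendAlgEquiv (H : A.LinearDisjoint B) (H' : A ⊔ B = ⊤) (σ : A ≃ₐ[R] A) :
    S ≃ₐ[R] S :=
  let e := (H.mulMapLeftOfSupEqTop H').restrictScalars R
  e.symm.trans ((Algebra.TensorProduct.congr σ AlgEquiv.refl).trans e)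

theorem extendAlgEquiv_apply_coe (H : A.LinearDisjoint B) (H' : A ⊔ B = ⊤) (σ : A ≃ₐ[R] A)
    (a : A) : H.extendAlgEquiv H' σ a = σ a := by
  have hsymm : (H.mulMapLeftOfSupEqTop H').symm a = a ⊗ₜ[R] 1 :=
    AlgEquiv.symm_apply_eq _ |>.mpr (by simp)
  simp [extendAlgEquiv, hsymm]

end Subalgebra.LinearDisjoint

theorem IntermediateField.LinearDisjoint.restrictNormalHom_surjective {F L : Type*} [Field F]
    [Field L] [Algebra F L] {E K : IntermediateField F L} [Normal F E] (H : E.LinearDisjoint K)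
    (H' : E ⊔ K = ⊤) :
    Function.Surjective (AlgEquiv.restrictNormalHom (F := F) (K₁ := L) E) := by
  have hsup : E.toSubalgebra ⊔ K.toSubalgebra = ⊤ := by
    rw [← sup_toSubalgebra_of_isAlgebraic_left, H', top_toSubalgebra]
  refine fun σ ↦ ⟨(linearDisjoint_iff'.mp H).extendAlgEquiv hsup σ, AlgEquiv.ext fun a ↦ ?_⟩
  apply Subtype.ext
  rw [AlgEquiv.restrictNormalHom_apply]
  exact (linearDisjoint_iff'.mp H).extendAlgEquiv_apply_coe hsup σ a

theorem IsGalois.of_restrictNormalHom_surjective {F L : Type*} [Field F] [Field L] [Algebra F L]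
    [FiniteDimensional F L] (E : IntermediateField F L) [IsGalois F E] [IsGalois E L]
    (h : Function.Surjective (AlgEquiv.restrictNormalHom (F := F) (K₁ := L) E)) :
    IsGalois F L := by
  apply IsGalois.of_card_aut_eq_finrank
  rw [← Subgroup.card_mul_index (AlgEquiv.restrictNormalHom E).ker, Subgroup.index_ker,
    MonoidHom.range_eq_top_of_surjective _ h, Subgroup.card_top, E.restrictNormalHom_ker,
    Nat.card_congr (IntermediateField.fixingSubgroupEquiv E).toEquiv,
    IsGalois.card_aut_eq_finrank E L, IsGalois.card_aut_eq_finrank F E, mul_comm,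
    Module.finrank_mul_finrank]

/-- if `F₁`, `F₂` are intermediate fields of a finite extension `L/F` with
`F₁F₂ = L` and `[L : F] = [F₁ : F]·[F₂ : F]` (so that `F₁ ⊗_F F₂ ≅ L`), and both `F₁/F` and
`L/F₁` are Galois, then `L/F` is Galois. -/
theorem statement_7 (F L : Type u) [Field F] [Field L] [Algebra F L] [FiniteDimensional F L]
    (F₁ F₂ : IntermediateField F L) (hcomp : F₁ ⊔ F₂ = ⊤)
    (hdeg : Module.finrank F L = Module.finrank F (↥F₁) * Module.finrank F (↥F₂))
    (h1 : IsGalois F (↥F₁)) (h2 : IsGalois (↥F₁) L) :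
    IsGalois F L := by
  have hld : F₁.LinearDisjoint F₂ :=
    .of_finrank_sup (by rw [hcomp, IntermediateField.finrank_top']; exact hdeg)
  exact IsGalois.of_restrictNormalHom_surjective F₁ (hld.restrictNormalHom_surjective hcomp)
end

section
/- Let M/K be a finite Galois extension of fields (all fields taken inside a fixed algebraic closure of K) and G a finite group. If Condition (3) holds, then Condition (2) holds: any M-adequate G-extension L/M that is defined over K is automatically Galois over K. -/
set_option synthInstance.maxHeartbeats 1000000
set_option maxHeartbeats 1000000
open IntermediateField

universe u

/-- `L/F` is a `G`-extension: a finite Galois extension with Galois group isomorphic to `G`. -/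
def IsGExt (F L : Type u) [Field F] [Field L] [Algebra F L] (G : Type u) [Group G] : Prop :=
  FiniteDimensional F L ∧ IsGalois F L ∧ Nonempty ((L ≃ₐ[F] L) ≃* G)

/-- `D` is an `F`-division algebra: a finite-dimensional (associative, unital) `F`-algebra which
is a division ring and whose center is exactly `F`. -/
def IsDivAlg (F D : Type u) [Field F] [Ring D] [Algebra F D] : Prop :=
  FiniteDimensional F D ∧ Nontrivial D ∧ (∀ x : D, x ≠ 0 → IsUnit x) ∧
    Subalgebra.center F D = ⊥

/-- The field `L` is (`F`-isomorphic to) a maximal subfield of the `F`-algebra `D`,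
i.e. it embeds `F`-linearly into `D` and `[L : F]² = dim_F D`. -/
def IsMaxSubfield (F L D : Type u) [Field F] [Field L] [Algebra F L] [Ring D]
    [Algebra F D] : Prop :=
  (∃ _ι : L →ₐ[F] D, True) ∧ Module.finrank F L ^ 2 = Module.finrank F D

/-- `L` is `F`-adequate: `L` is a maximal subfield of some `F`-division algebra. -/
def IsAdeq (F L : Type u) [Field F] [Field L] [Algebra F L] : Prop :=
  ∃ (D : Type u) (_ : Ring D) (_ : Algebra F D), IsDivAlg F D ∧ IsMaxSubfield F L D

/-- `G` is `F`-admissible: there is an `F`-adequate `G`-extension of `F`. -/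
def IsAdmis (F : Type u) [Field F] (G : Type u) [Group G] : Prop :=
  ∃ (L : Type u) (_ : Field L) (_ : Algebra F L), IsGExt F L G ∧ IsAdeq F L

section Conditions

variable (K Ω : Type u) [Field K] [Field Ω] [Algebra K Ω] [IsAlgClosure K Ω]
variable (M : IntermediateField K Ω) (G : Type u) [Group G]

/-- Condition (1): `G` is `M`-admissible. -/
def Cond1 : Prop := IsAdmis (↥M) G

/-- Condition (2): there is an `M`-adequate `G`-extension `L/M` with `L/K` Galois. -/
def Cond2 : Prop :=
  ∃ (L : IntermediateField K Ω) (h : M ≤ L),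
    IsGExt (↥M) (↥(extendScalars h)) G ∧ IsAdeq (↥M) (↥(extendScalars h)) ∧ IsGalois K ↥L

/-- Condition (3): there is an `M`-adequate `G`-extension `L/M` which is defined over `K`. -/
def Cond3 : Prop :=
  ∃ (L : IntermediateField K Ω) (h : M ≤ L),
    IsGExt (↥M) (↥(extendScalars h)) G ∧ IsAdeq (↥M) (↥(extendScalars h)) ∧
    ∃ L₀ : IntermediateField K Ω, L₀ ≤ L ∧ L₀ ⊓ M = ⊥ ∧ L₀ ⊔ M = L ∧
      Module.finrank K ↥L₀ = Module.finrank (↥M) (↥(extendScalars h))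

/-- Condition (4): as Condition (3), with moreover `L₀/K` a `G`-extension. -/
def Cond4 : Prop :=
  ∃ (L : IntermediateField K Ω) (h : M ≤ L),
    IsGExt (↥M) (↥(extendScalars h)) G ∧ IsAdeq (↥M) (↥(extendScalars h)) ∧
    ∃ L₀ : IntermediateField K Ω, L₀ ≤ L ∧ L₀ ⊓ M = ⊥ ∧ L₀ ⊔ M = L ∧
      Module.finrank K ↥L₀ = Module.finrank (↥M) (↥(extendScalars h)) ∧
      IsGExt K (↥L₀) G

/-- Condition (5): there are a `K`-division algebra `D₀` and a `G`-extension `L/M` such that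
`D₀ ⊗_K M` (realized as `M ⊗_K D₀`) is a division algebra having `L` as a maximal subfield. -/
def Cond5 : Prop :=
  ∃ (D₀ : Type u) (_ : Ring D₀) (_ : Algebra K D₀), IsDivAlg K D₀ ∧
    ∃ (L : IntermediateField K Ω) (h : M ≤ L),
      IsGExt (↥M) (↥(extendScalars h)) G ∧
      IsDivAlg (↥M) (TensorProduct K (↥M) D₀) ∧
      IsMaxSubfield (↥M) (↥(extendScalars h)) (TensorProduct K (↥M) D₀)

/-- Condition (6): there is a `K`-division algebra `D₀` with a maximal subfield `L₀` which is a
`G`-extension of `K` with `L₀ ∩ M = K`, such that `D₀ ⊗_K M` is a division algebra having the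
compositum `L₀M` as a maximal subfield. -/
def Cond6 : Prop :=
  ∃ (D₀ : Type u) (_ : Ring D₀) (_ : Algebra K D₀), IsDivAlg K D₀ ∧
    ∃ L₀ : IntermediateField K Ω,
      IsGExt K (↥L₀) G ∧ IsMaxSubfield K (↥L₀) D₀ ∧ L₀ ⊓ M = ⊥ ∧
      IsDivAlg (↥M) (TensorProduct K (↥M) D₀) ∧
      IsMaxSubfield (↥M) (↥(extendScalars (le_sup_right : M ≤ L₀ ⊔ M)))
        (TensorProduct K (↥M) D₀)

/-- Condition (7): there is a `K`-adequate `G`-extension `L₀/K` with `L₀ ∩ M = K` such that the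
compositum `L₀M` is `M`-adequate. -/
def Cond7 : Prop :=
  ∃ L₀ : IntermediateField K Ω,
    IsGExt K (↥L₀) G ∧ IsAdeq K (↥L₀) ∧ L₀ ⊓ M = ⊥ ∧
    IsAdeq (↥M) (↥(extendScalars (le_sup_right : M ≤ L₀ ⊔ M)))

/-- Condition (8): there is a `K`-adequate extension `L₀/K` with `L₀ ∩ M = K` such that the
compositum `L = L₀M` is an `M`-adequate `G`-extension of `M`. -/
def Cond8 : Prop :=
  ∃ L₀ : IntermediateField K Ω,
    FiniteDimensional K (↥L₀) ∧ IsAdeq K (↥L₀) ∧ L₀ ⊓ M = ⊥ ∧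
    IsGExt (↥M) (↥(extendScalars (le_sup_right : M ≤ L₀ ⊔ M))) G ∧
    IsAdeq (↥M) (↥(extendScalars (le_sup_right : M ≤ L₀ ⊔ M)))

/-- Condition (9): `G` is both `K`-admissible and `M`-admissible. -/
def Cond9 : Prop := IsAdmis K G ∧ IsAdmis (↥M) G

/-- Condition (10): there is a `K`-division algebra `D₀` having a maximal subfield which is a
`G`-extension of `K`, such that `D₀ ⊗_K M` is also a division algebra having a maximal subfield
which is a `G`-extension of `M`. -/
def Cond10 : Prop :=
  ∃ (D₀ : Type u) (_ : Ring D₀) (_ : Algebra K D₀), IsDivAlg K D₀ ∧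
    (∃ L₀ : IntermediateField K Ω, IsGExt K (↥L₀) G ∧ IsMaxSubfield K (↥L₀) D₀) ∧
    IsDivAlg (↥M) (TensorProduct K (↥M) D₀) ∧
    ∃ (L : IntermediateField K Ω) (h : M ≤ L),
      IsGExt (↥M) (↥(extendScalars h)) G ∧
      IsMaxSubfield (↥M) (↥(extendScalars h)) (TensorProduct K (↥M) D₀)

end Conditions

/-!
Write `L = L₀M`. Since `L = M(L₀)`, restriction to `L₀` is injective on `Gal(L/M)`, so it
produces `[L : M] = [L₀ : K]` distinct `K`-embeddings of `L₀` into `Ω`. There are at most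
`[L₀ : K]` such embeddings, hence every one of them lands in `L`. As `M/K` is normal, every
`K`-automorphism `σ` of `Ω` then satisfies `σ(L) = σ(L₀)σ(M) ⊆ L`, so `L/K` is normal; it is
separable as a tower of separable extensions.
-/

open Module

namespace IntermediateField

variable {K Ω : Type*} [Field K] [Field Ω] [Algebra K Ω] {E M : IntermediateField K Ω}

theorem extendScalars_sup_eq_adjoin (h : M ≤ E ⊔ M) : extendScalars h = adjoin M (E : Set Ω) :=
  restrictScalars_injective K <| by
    rw [extendScalars_restrictScalars, restrictScalars_adjoin_eq_sup, adjoin_self, sup_comm]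

def restrictSupLeft (h : M ≤ E ⊔ M) (g : Gal(extendScalars h/M)) : E →ₐ[K] Ω :=
  ((extendScalars h).val.restrictScalars K).comp
    (((g : extendScalars h →ₐ[M] extendScalars h).restrictScalars K).comp (inclusion le_sup_left))

theorem restrictSupLeft_injective (h : M ≤ E ⊔ M) : Function.Injective (restrictSupLeft h) :=
  fun _ _ hg => AlgEquiv.coe_toAlgHom_injective <|
    algHom_ext_of_eq_adjoin M (extendScalars_sup_eq_adjoin h) fun x hx =>
      Subtype.ext (DFunLike.congr_fun hg (⟨x, hx⟩ : E))

theorem fieldRange_le_sup_of_finrank_eq (h : M ≤ E ⊔ M)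
    [FiniteDimensional M (extendScalars h)] [IsGalois M (extendScalars h)]
    (hrank : finrank K E = finrank M (extendScalars h)) (φ : E →ₐ[K] Ω) :
    φ.fieldRange ≤ E ⊔ M := by
  have : FiniteDimensional K E := .of_finrank_pos (hrank ▸ finrank_pos)
  have hbij : Function.Bijective (restrictSupLeft h) :=
    (restrictSupLeft_injective h).bijective_of_nat_card_le <| by
      rw [IsGalois.card_aut_eq_finrank, ← hrank]
      exact card_algHom_le_finrank K E Ω
  obtain ⟨g, rfl⟩ := hbij.2 φ
  rintro _ ⟨x, rfl⟩
  exact (g ⟨x, (le_sup_left : E ≤ E ⊔ M) x.2⟩).2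

theorem normal_sup_of_finrank_eq [Normal K Ω] [Normal K M] (h : M ≤ E ⊔ M)
    [FiniteDimensional M (extendScalars h)] [IsGalois M (extendScalars h)]
    (hrank : finrank K E = finrank M (extendScalars h)) : Normal K ↥(E ⊔ M) := by
  refine normal_iff_forall_map_le.2 fun σ => ?_
  have hE : E.map σ = (σ.comp E.val).fieldRange := by
    rw [← AlgHom.map_fieldRange, fieldRange_val]
  rw [map_sup, hE]
  exact sup_le (fieldRange_le_sup_of_finrank_eq h hrank _)
    ((normal_iff_forall_map_le.1 ‹_› σ).trans le_sup_right)

theorem isGalois_sup_of_finrank_eq [Normal K Ω] [IsGalois K M] (h : M ≤ E ⊔ M)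
    [FiniteDimensional M (extendScalars h)] [IsGalois M (extendScalars h)]
    (hrank : finrank K E = finrank M (extendScalars h)) : IsGalois K ↥(E ⊔ M) where
  to_isSeparable := Algebra.IsSeparable.trans K M (extendScalars h)
  to_normal := normal_sup_of_finrank_eq h hrank

end IntermediateField

theorem statement_8_general {K Ω : Type u} [Field K] [Field Ω] [Algebra K Ω] [IsAlgClosure K Ω]
    (M : IntermediateField K Ω) [IsGalois K (↥M)]
    (G : Type u) [Group G]
    (h3 : Cond3 K Ω M G) :
    Cond2 K Ω M G := by
  obtain ⟨_, h, hGExt, hAdeq, L₀, -, -, rfl, hrank⟩ := h3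
  have := hGExt.1
  have := hGExt.2.1
  exact ⟨_, h, hGExt, hAdeq, isGalois_sup_of_finrank_eq h hrank⟩

/-- if `M/K` is Galois then Condition (3) implies Condition (2). -/
theorem statement_8 {K Ω : Type u} [Field K] [Field Ω] [Algebra K Ω] [IsAlgClosure K Ω]
    (M : IntermediateField K Ω) [FiniteDimensional K (↥M)] [IsGalois K (↥M)]
    (G : Type u) [Group G] [Finite G]
    (h3 : Cond3 K Ω M G) :
    Cond2 K Ω M G :=
  statement_8_general M G h3
end

section
/- Let p be an odd prime and let V = (ℤ/pℤ)³ be the elementary abelian group of order p³. Then for every group homomorphism φ : V → Aut(V), the semidirect product V ⋊_φ V cannot be generated by fewer than 4 elements; that is, every generating set of V ⋊_φ V has cardinality at least 4. -/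
/-!
A nonzero `ZMod p`-module on which a `p`-group acts has a nonzero fixed vector (orbit counting
mod `p`). Applied to the dual of `V`, this gives a nonzero functional `f` on `V` invariant under
`φ`, so `(n, w) ↦ (w, f n)` is a surjective homomorphism from `V ⋊[φ] W` onto the elementary
abelian group `W × ZMod p`. Generators of `V ⋊[φ] W` map onto a spanning set of this
`(dim W + 1)`-dimensional space.
-/

open Module

theorem Module.finrank_le_ncard_of_addSubgroupClosure_eq_top {R M : Type*} [Ring R]
    [StrongRankCondition R] [AddCommGroup M] [Module R M] {T : Set M} (hT : T.Finite)
    (hclosure : AddSubgroup.closure T = ⊤) : finrank R M ≤ T.ncard := by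
  have : Fintype T := hT.fintype
  have hspan : Submodule.span R T = ⊤ := by
    refine eq_top_iff.2 fun x _ => ?_
    have hx : x ∈ AddSubgroup.closure T := hclosure ▸ AddSubgroup.mem_top x
    exact AddSubgroup.closure_le (K := (Submodule.span R T).toAddSubgroup) |>.2
      Submodule.subset_span hx
  have h := finrank_span_le_card (R := R) T
  rwa [hspan, finrank_top, ← Set.ncard_eq_toFinset_card'] at h

theorem Module.finrank_le_ncard_of_surjective_of_closure_eq_top {R G M : Type*} [Ring R]
    [StrongRankCondition R] [Group G] [AddCommGroup M] [Module R M]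
    {ρ : G →* Multiplicative M} (hρ : Function.Surjective ρ) {S : Set G} (hS : S.Finite)
    (hclosure : Subgroup.closure S = ⊤) : finrank R M ≤ S.ncard := by
  have himage : Subgroup.closure (ρ '' S) = ⊤ := by
    rw [← MonoidHom.map_closure, hclosure, Subgroup.map_top_of_surjective ρ hρ]
  have hadd : AddSubgroup.closure (Multiplicative.ofAdd ⁻¹' (ρ '' S)) = ⊤ := by
    rw [← Subgroup.toAddSubgroup'_closure, himage, map_top]
  calc finrank R M ≤ (Multiplicative.ofAdd ⁻¹' (ρ '' S)).ncard :=
        finrank_le_ncard_of_addSubgroupClosure_eq_top ((hS.image ρ).preimage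
          Multiplicative.ofAdd.injective.injOn) hadd
    _ = (ρ '' S).ncard := Set.ncard_preimage_of_injective_subset_range
          Multiplicative.ofAdd.injective (by simp)
    _ ≤ S.ncard := Set.ncard_image_le hS

variable {p : ℕ} [Fact p.Prime]

namespace Representation

variable {G V : Type*} [Group G] [AddCommGroup V] [Module (ZMod p) V]

theorem invariants_ne_bot_of_isPGroup [Finite V] [Nontrivial V] (hG : IsPGroup p G)
    (ρ : Representation (ZMod p) G V) : ρ.invariants ≠ ⊥ := by
  let _ : MulAction G V := MulAction.compHom V ρ
  have hcard : p ∣ Nat.card V :=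
    (ZModModule.isPGroup_multiplicative (G := V)).card_eq_or_dvd.resolve_left
      Finite.one_lt_card.ne'
  obtain ⟨v, hv, hv0⟩ := hG.exists_fixed_point_of_prime_dvd_card_of_fixed_point V hcard
    (a := 0) fun g => map_zero (ρ g)
  exact (Submodule.ne_bot_iff _).2 ⟨v, hv, hv0.symm⟩

def ofMulAut (φ : G →* MulAut (Multiplicative V)) : Representation (ZMod p) G V where
  toFun g := (AddMonoidHom.toMultiplicative.symm (φ g).toMonoidHom).toZModLinearMap p
  map_one' := by ext; simp
  map_mul' g h := by ext; simp

theorem ofMulAut_apply (φ : G →* MulAut (Multiplicative V)) (g : G) (v : V) :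
    ofMulAut (p := p) φ g v = (φ g (.ofAdd v)).toAdd := rfl

end Representation

section

variable {V W : Type*} [AddCommGroup V] [Module (ZMod p) V] [AddCommGroup W] [Module (ZMod p) W]

theorem exists_ne_zero_dual_invariant {G : Type*} [Group G] [Finite V] [Nontrivial V]
    (hG : IsPGroup p G) (φ : G →* MulAut (Multiplicative V)) :
    ∃ f : Module.Dual (ZMod p) V, f ≠ 0 ∧ ∀ g n, f (φ g n).toAdd = f n.toAdd := by
  have : Module.Finite (ZMod p) V := Module.Finite.of_finite
  have : Finite (Module.Dual (ZMod p) V) := Module.finite_of_finite (ZMod p)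
  obtain ⟨f, hf, hf0⟩ :=
    (Submodule.ne_bot_iff _).1 ((Representation.ofMulAut φ).dual.invariants_ne_bot_of_isPGroup hG)
  refine ⟨f, hf0, fun g n => ?_⟩
  simpa [Module.Dual.transpose_apply, Representation.ofMulAut_apply] using
    LinearMap.congr_fun (hf g⁻¹) n.toAdd

theorem SemidirectProduct.exists_surjective_onto_prod [Finite V] [Nontrivial V]
    (φ : Multiplicative W →* MulAut (Multiplicative V)) :
    ∃ ρ : Multiplicative V ⋊[φ] Multiplicative W →* Multiplicative (W × ZMod p),
      Function.Surjective ρ := by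
  obtain ⟨f, hf0, hf⟩ :=
    exists_ne_zero_dual_invariant (p := p) ZModModule.isPGroup_multiplicative φ
  let χ :=
    AddMonoidHom.toMultiplicative ((LinearMap.inr (ZMod p) W (ZMod p)).comp f).toAddMonoidHom
  let ψ := AddMonoidHom.toMultiplicative (LinearMap.inl (ZMod p) W (ZMod p)).toAddMonoidHom
  refine ⟨SemidirectProduct.lift χ ψ fun g => ?_, fun x => ?_⟩
  · refine MonoidHom.ext fun n => ?_
    simp only [MonoidHom.comp_apply, MulEquiv.coe_toMonoidHom, MulAut.conj_apply,
      mul_inv_cancel_comm]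
    simp [χ, hf]
  · obtain ⟨⟨w, c⟩, rfl⟩ := Multiplicative.ofAdd.surjective x
    obtain ⟨n, rfl⟩ := LinearMap.surjective_of_ne_zero hf0 c
    refine ⟨.inl (.ofAdd n) * .inr (.ofAdd w), ?_⟩
    simp [χ, ψ, ← ofAdd_add]

theorem SemidirectProduct.finrank_add_one_le_ncard_of_closure_eq_top [Finite V] [Nontrivial V]
    [Finite W] (φ : Multiplicative W →* MulAut (Multiplicative V))
    {S : Set (Multiplicative V ⋊[φ] Multiplicative W)} (hS : Subgroup.closure S = ⊤) :
    finrank (ZMod p) W + 1 ≤ S.ncard := by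
  obtain ⟨ρ, hρ⟩ := SemidirectProduct.exists_surjective_onto_prod (p := p) φ
  have : Finite (Multiplicative V ⋊[φ] Multiplicative W) :=
    Finite.of_equiv _ SemidirectProduct.equivProd.symm
  simpa [Module.finrank_prod] using
    finrank_le_ncard_of_surjective_of_closure_eq_top (R := ZMod p) hρ S.toFinite hS

end

theorem statement_10_general (p : ℕ) (hp : p.Prime)
    (φ : Multiplicative (Fin 3 → ZMod p) →* MulAut (Multiplicative (Fin 3 → ZMod p)))
    (S : Set (SemidirectProduct (Multiplicative (Fin 3 → ZMod p))
      (Multiplicative (Fin 3 → ZMod p)) φ))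
    (hS : Subgroup.closure S = ⊤) :
    4 ≤ S.ncard := by
  have : Fact p.Prime := ⟨hp⟩
  simpa using SemidirectProduct.finrank_add_one_le_ncard_of_closure_eq_top (p := p) φ hS

/-- for `p` an odd prime and `V = (ℤ/pℤ)³`, for every homomorphism
`φ : V → Aut(V)` the semidirect product `V ⋊[φ] V` cannot be generated by fewer than `4`
elements: every generating set has cardinality at least `4`. -/
theorem statement_10 (p : ℕ) (hp : p.Prime) (hodd : Odd p)
    (φ : Multiplicative (Fin 3 → ZMod p) →* MulAut (Multiplicative (Fin 3 → ZMod p)))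
    (S : Set (SemidirectProduct (Multiplicative (Fin 3 → ZMod p))
      (Multiplicative (Fin 3 → ZMod p)) φ))
    (hS : Subgroup.closure S = ⊤) :
    4 ≤ S.ncard :=
  statement_10_general p hp φ S hS
end
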